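/- For any a < x < b, any a ≤ t₀ ≤ t₁ ≤ b, and functions f, u : [a,b] → ℝ for which all the Riemann–Stieltjes integrals below exist, the identity ∫ₐ^{t₀} [u(s) − u(a)] df(s) + ∫_{t₀}^{t₁} [u(s) − u(x)] df(s) + ∫_{t₁}^{b} [u(s) − u(b)] df(s) = [u(x) − u(a)]·f(t₀) + [u(b) − u(x)]·f(t₁) − ∫ₐᵇ f(s) du(s) holds. -/

import Mathlib

/-!
Choose partitions `P₁, P₂, P₃` of `[a, t₀]`, `[t₀, t₁]`, `[t₁, b]` of small mesh and concatenate
them to a partition `Q` of `[a, b]` that has `t₀` and `t₁` among its points. Swapping the roles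
of points and tags of `Q` gives a partition `Q*` of `[a, b]` of at most twice the mesh, and Abel
summation turns the Riemann–Stieltjes sum of `u` against `f` over `Q` into
`f(b) u(b) - f(a) u(a)` minus the sum of `f` against `u` over `Q*`. Subtracting the constants
`u(a), u(x), u(b)` on the three pieces yields the identity exactly at the level of sums, and it
passes to the limit as the mesh tends to `0`.
-/

/-- A tagged partition of the interval `[a, b]`. -/
structure TaggedPartition (a b : ℝ) where
  n : ℕ
  pts : ℕ → ℝ
  tag : ℕ → ℝ
  mono : ∀ i, pts i ≤ pts (i + 1)
  first : pts 0 = a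
  last : pts n = b
  tag_mem : ∀ i, pts i ≤ tag i ∧ tag i ≤ pts (i + 1)

/-- The Riemann–Stieltjes sum of `f` with respect to `u` over a tagged partition. -/
def RSsum (f u : ℝ → ℝ) {a b : ℝ} (P : TaggedPartition a b) : ℝ :=
  ∑ i ∈ Finset.range P.n, f (P.tag i) * (u (P.pts (i + 1)) - u (P.pts i))

/-- `IsRSIntegral f u a b I` means the Riemann–Stieltjes integral `∫ₐᵇ f du` exists
and equals `I`: Riemann–Stieltjes sums converge to `I` as the mesh tends to `0`. -/
def IsRSIntegral (f u : ℝ → ℝ) (a b I : ℝ) : Prop :=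
  ∀ ε > 0, ∃ δ > 0, ∀ P : TaggedPartition a b,
    (∀ i < P.n, P.pts (i + 1) - P.pts i < δ) → |RSsum f u P - I| < ε

/-- The total (Jordan) variation of `u` on `[a, b]`. -/
noncomputable def totalVar (u : ℝ → ℝ) (a b : ℝ) : ℝ :=
  (eVariationOn u (Set.Icc a b)).toReal

open Filter Topology

lemma Finset.sum_range_succ_mul_sub_add_sum_range_mul_sub {R : Type*} [CommRing R]
    (F U : ℕ → R) (n : ℕ) :
    ∑ i ∈ range (n + 1), F i * (U (i + 1) - U i) + ∑ i ∈ range n, U (i + 1) * (F (i + 1) - F i)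
      = F n * U (n + 1) - F 0 * U 0 := by
  induction n with
  | zero => simp [mul_sub]
  | succ n ih =>
    simp only [sum_range_succ] at ih ⊢
    linear_combination ih

section SeqAppend

variable {α : Type*}

def seqAppend (n : ℕ) (p q : ℕ → α) (i : ℕ) : α :=
  if i < n then p i else q (i - n)

lemma seqAppend_of_lt {n i : ℕ} {p q : ℕ → α} (hi : i < n) :
    seqAppend n p q i = p i :=
  if_pos hi

lemma seqAppend_add (n j : ℕ) (p q : ℕ → α) : seqAppend n p q (n + j) = q j := by
  simp [seqAppend]

lemma seqAppend_of_le {n i : ℕ} {p q : ℕ → α} (hpq : q 0 = p n) (hi : i ≤ n) :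
    seqAppend n p q i = p i := by
  rcases hi.lt_or_eq with hi | rfl
  · exact seqAppend_of_lt hi
  · simpa using (seqAppend_add i 0 p q).trans hpq

end SeqAppend

namespace TaggedPartition

variable {a b c : ℝ}

lemma pts_monotone (P : TaggedPartition a b) : Monotone P.pts :=
  monotone_nat_of_le_succ P.mono

lemma le (P : TaggedPartition a b) : a ≤ b :=
  P.first.symm.trans_le ((P.pts_monotone (Nat.zero_le P.n)).trans_eq P.last)

lemma pts_le_right (P : TaggedPartition a b) {i : ℕ} (hi : i ≤ P.n) : P.pts i ≤ b :=
  (P.pts_monotone hi).trans_eq P.last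

lemma right_le_pts (P : TaggedPartition a b) {i : ℕ} (hi : P.n ≤ i) : b ≤ P.pts i :=
  P.last.symm.trans_le (P.pts_monotone hi)

def MeshLT (P : TaggedPartition a b) (δ : ℝ) : Prop :=
  ∀ i < P.n, P.pts (i + 1) - P.pts i < δ

def MeshTendstoZero {ι : Type*} (l : Filter ι) (P : ι → TaggedPartition a b) : Prop :=
  ∀ δ > 0, ∀ᶠ k in l, (P k).MeshLT δ

lemma RSsum_sub_const (P : TaggedPartition a b) (u f : ℝ → ℝ) (c : ℝ) :
    RSsum (fun s => u s - c) f P = RSsum u f P - c * (f b - f a) := by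
  have hconst : ∑ i ∈ Finset.range P.n, c * (f (P.pts (i + 1)) - f (P.pts i))
      = c * (f b - f a) := by
    rw [← Finset.mul_sum, Finset.sum_range_sub (fun i => f (P.pts i)), P.first, P.last]
  rw [RSsum, RSsum, ← hconst, ← Finset.sum_sub_distrib]
  exact Finset.sum_congr rfl fun i _ => by ring

lemma monotone_min_add_mul (c d : ℝ) {s : ℝ} (hs : 0 ≤ s) :
    Monotone fun i : ℕ => min (c + i * s) d :=
  fun _ _ hij => min_le_min_right d (by gcongr)

/-- `N + 1` equal steps, capped at `d` so that monotonicity holds beyond the last point. -/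
noncomputable def uniform (c d : ℝ) (h : c ≤ d) (N : ℕ) : TaggedPartition c d where
  n := N + 1
  pts i := min (c + i * ((d - c) / (N + 1))) d
  tag i := min (c + i * ((d - c) / (N + 1))) d
  mono i := monotone_min_add_mul c d (div_nonneg (sub_nonneg.2 h) N.cast_add_one_pos.le) (Nat.le_succ i)
  first := by simpa using h
  last := by
    apply min_eq_right
    push_cast
    rw [mul_div_cancel₀ _ (by positivity)]
    linarith
  tag_mem i :=
    ⟨le_rfl, monotone_min_add_mul c d (div_nonneg (sub_nonneg.2 h) N.cast_add_one_pos.le) (Nat.le_succ i)⟩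

lemma uniform_meshLT (c d : ℝ) (h : c ≤ d) (N : ℕ) {δ : ℝ} (hδ : (d - c) / (N + 1) < δ) :
    (uniform c d h N).MeshLT δ := by
  intro i _
  refine lt_of_le_of_lt ?_ hδ
  simp only [uniform]
  rw [sub_le_iff_le_add, ← min_add_add_left]
  have : 0 ≤ (d - c) / (N + 1) := div_nonneg (sub_nonneg.2 h) N.cast_add_one_pos.le
  exact min_le_min (by push_cast; linarith) (by linarith)

lemma meshTendstoZero_uniform (c d : ℝ) (h : c ≤ d) :
    MeshTendstoZero atTop (uniform c d h) := by
  intro δ hδ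
  have hlim : Tendsto (fun N : ℕ => (d - c) / ((N : ℝ) + 1)) atTop (𝓝 0) := by
    simpa only [mul_one_div, mul_zero] using
      tendsto_one_div_add_atTop_nhds_zero_nat.const_mul (d - c)
  filter_upwards [hlim.eventually_lt_const hδ] with N hN
  exact uniform_meshLT c d h N hN

def concat (P : TaggedPartition a b) (Q : TaggedPartition b c) : TaggedPartition a c where
  n := P.n + Q.n
  pts := seqAppend P.n P.pts Q.pts
  tag := seqAppend P.n P.tag Q.tag
  mono i := by
    have hb : Q.pts 0 = P.pts P.n := Q.first.trans P.last.symm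
    rcases lt_or_ge i P.n with hi | hi
    · rw [seqAppend_of_le hb hi.le, seqAppend_of_le hb hi]
      exact P.mono i
    · obtain ⟨j, rfl⟩ := Nat.exists_eq_add_of_le hi
      rw [seqAppend_add, add_assoc, seqAppend_add]
      exact Q.mono j
  first := by
    rw [seqAppend_of_le (Q.first.trans P.last.symm) (Nat.zero_le _), P.first]
  last := by rw [seqAppend_add, Q.last]
  tag_mem i := by
    have hb : Q.pts 0 = P.pts P.n := Q.first.trans P.last.symm
    rcases lt_or_ge i P.n with hi | hi
    · rw [seqAppend_of_le hb hi.le, seqAppend_of_le hb hi, seqAppend_of_lt hi]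
      exact P.tag_mem i
    · obtain ⟨j, rfl⟩ := Nat.exists_eq_add_of_le hi
      rw [seqAppend_add, seqAppend_add, add_assoc, seqAppend_add]
      exact Q.tag_mem j

lemma concat_n (P : TaggedPartition a b) (Q : TaggedPartition b c) :
    (P.concat Q).n = P.n + Q.n := rfl

lemma concat_pts (P : TaggedPartition a b) (Q : TaggedPartition b c) :
    (P.concat Q).pts = seqAppend P.n P.pts Q.pts := rfl

lemma concat_tag (P : TaggedPartition a b) (Q : TaggedPartition b c) :
    (P.concat Q).tag = seqAppend P.n P.tag Q.tag := rfl

lemma RSsum_concat (f u : ℝ → ℝ) (P : TaggedPartition a b) (Q : TaggedPartition b c) :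
    RSsum f u (P.concat Q) = RSsum f u P + RSsum f u Q := by
  have hb : Q.pts 0 = P.pts P.n := Q.first.trans P.last.symm
  rw [RSsum, concat_n, concat_pts, concat_tag, Finset.sum_range_add]
  congr 1
  · refine Finset.sum_congr rfl fun i hi => ?_
    have hi := Finset.mem_range.1 hi
    rw [seqAppend_of_lt hi, seqAppend_of_le hb hi, seqAppend_of_le hb hi.le]
  · refine Finset.sum_congr rfl fun j _ => ?_
    rw [seqAppend_add, add_assoc, seqAppend_add, seqAppend_add]

lemma MeshLT.concat {P : TaggedPartition a b} {Q : TaggedPartition b c} {δ : ℝ}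
    (hP : P.MeshLT δ) (hQ : Q.MeshLT δ) : (P.concat Q).MeshLT δ := by
  have hb : Q.pts 0 = P.pts P.n := Q.first.trans P.last.symm
  intro i hi
  rw [concat_n] at hi
  rw [concat_pts]
  rcases lt_or_ge i P.n with hi' | hi'
  · rw [seqAppend_of_le hb hi'.le, seqAppend_of_le hb hi']
    exact hP i hi'
  · obtain ⟨j, rfl⟩ := Nat.exists_eq_add_of_le hi'
    rw [seqAppend_add, add_assoc, seqAppend_add]
    exact hQ j (by omega)

lemma MeshTendstoZero.concat {ι : Type*} {l : Filter ι} {P : ι → TaggedPartition a b}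
    {Q : ι → TaggedPartition b c} (hP : MeshTendstoZero l P) (hQ : MeshTendstoZero l Q) :
    MeshTendstoZero l fun k => (P k).concat (Q k) := fun δ hδ => by
  filter_upwards [hP δ hδ, hQ δ hδ] with k hPk hQk using hPk.concat hQk

/-- The points of `P.dual` are `a`, the tags of `P` and `b`; its tags are the points of `P`
(capped at `b`, to keep `tag_mem` true beyond the last point). -/
def dual (P : TaggedPartition a b) : TaggedPartition a b where
  n := P.n + 1
  pts
    | 0 => a
    | j + 1 => min (P.tag j) b
  tag i := min (P.pts i) b
  mono
    | 0 => le_min (P.first.ge.trans (P.tag_mem 0).1) P.le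
    | j + 1 => min_le_min_right b ((P.tag_mem j).2.trans (P.tag_mem (j + 1)).1)
  first := rfl
  last := min_eq_right ((P.right_le_pts le_rfl).trans (P.tag_mem P.n).1)
  tag_mem
    | 0 => ⟨le_min P.first.ge P.le, min_le_min_right b (P.tag_mem 0).1⟩
    | j + 1 => ⟨min_le_min_right b (P.tag_mem j).2, min_le_min_right b (P.tag_mem (j + 1)).1⟩

lemma dual_pts_succ (P : TaggedPartition a b) {i : ℕ} (hi : i < P.n) :
    P.dual.pts (i + 1) = P.tag i :=
  min_eq_left ((P.tag_mem i).2.trans (P.pts_le_right hi))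

lemma dual_tag (P : TaggedPartition a b) {i : ℕ} (hi : i ≤ P.n) : P.dual.tag i = P.pts i :=
  min_eq_left (P.pts_le_right hi)

lemma MeshLT.min_sub_min_lt {P : TaggedPartition a b} {δ : ℝ} (h : P.MeshLT δ) (hδ : 0 < δ)
    (i : ℕ) : min (P.pts (i + 1)) b - min (P.pts i) b < δ := by
  rcases lt_or_ge i P.n with hi | hi
  · rw [min_eq_left (P.pts_le_right hi), min_eq_left (P.pts_le_right hi.le)]
    exact h i hi
  · rw [min_eq_right (P.right_le_pts (hi.trans (Nat.le_succ i))),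
      min_eq_right (P.right_le_pts hi), sub_self]
    exact hδ

lemma MeshLT.dual {P : TaggedPartition a b} {δ : ℝ} (h : P.MeshLT δ) (hδ : 0 < δ) :
    P.dual.MeshLT (2 * δ) := by
  intro i _
  have hstep := h.min_sub_min_lt hδ
  rcases i with _ | j
  · have hup : P.dual.pts 1 ≤ min (P.pts 1) b := min_le_min_right b (P.tag_mem 0).2
    have ha : P.dual.pts 0 = min (P.pts 0) b := by
      rw [P.first]
      exact (min_eq_left P.le).symm
    linarith [hstep 0]
  · have hup : P.dual.pts (j + 2) ≤ min (P.pts (j + 2)) b :=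
      min_le_min_right b (P.tag_mem (j + 1)).2
    have hlow : min (P.pts j) b ≤ P.dual.pts (j + 1) := min_le_min_right b (P.tag_mem j).1
    linarith [hstep j, hstep (j + 1)]

lemma MeshTendstoZero.dual {ι : Type*} {l : Filter ι} {P : ι → TaggedPartition a b}
    (hP : MeshTendstoZero l P) : MeshTendstoZero l fun k => (P k).dual := fun δ hδ => by
  filter_upwards [hP (δ / 2) (half_pos hδ)] with k hk
  simpa only [mul_div_cancel₀ δ two_ne_zero] using hk.dual (half_pos hδ)

lemma RSsum_add_RSsum_dual (f u : ℝ → ℝ) (P : TaggedPartition a b) :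
    RSsum u f P + RSsum f u P.dual = f b * u b - f a * u a := by
  have hparts := Finset.sum_range_succ_mul_sub_add_sum_range_mul_sub
    (fun i => f (P.dual.tag i)) (fun i => u (P.dual.pts i)) P.n
  have hP : ∑ i ∈ Finset.range P.n,
      u (P.dual.pts (i + 1)) * (f (P.dual.tag (i + 1)) - f (P.dual.tag i)) = RSsum u f P := by
    refine Finset.sum_congr rfl fun i hi => ?_
    have hi := Finset.mem_range.1 hi
    rw [P.dual_pts_succ hi, P.dual_tag hi, P.dual_tag hi.le]
  have hb : P.dual.pts (P.n + 1) = b := P.dual.last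
  rw [hP, P.dual_tag le_rfl, P.dual_tag (Nat.zero_le _), P.last, P.first, hb, P.dual.first]
    at hparts
  rw [← hparts, add_comm]
  rfl

end TaggedPartition

lemma IsRSIntegral.tendsto {f u : ℝ → ℝ} {a b I : ℝ} (hI : IsRSIntegral f u a b I)
    {ι : Type*} {l : Filter ι} {P : ι → TaggedPartition a b}
    (hP : TaggedPartition.MeshTendstoZero l P) :
    Tendsto (fun k => RSsum f u (P k)) l (𝓝 I) := by
  rw [Metric.tendsto_nhds]
  intro ε hε
  obtain ⟨δ, hδ, H⟩ := hI ε hε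
  filter_upwards [hP δ hδ] with k hk
  rw [Real.dist_eq]
  exact H _ hk

open TaggedPartition

lemma RSsum_two_point_dual (f u : ℝ → ℝ) {a t₀ t₁ b : ℝ} (x : ℝ) (P₁ : TaggedPartition a t₀)
    (P₂ : TaggedPartition t₀ t₁) (P₃ : TaggedPartition t₁ b) :
    RSsum (fun s => u s - u a) f P₁ + RSsum (fun s => u s - u x) f P₂
        + RSsum (fun s => u s - u b) f P₃
      = (u x - u a) * f t₀ + (u b - u x) * f t₁ - RSsum f u ((P₁.concat P₂).concat P₃).dual := by
  have hQ := RSsum_add_RSsum_dual f u ((P₁.concat P₂).concat P₃)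
  rw [RSsum_concat, RSsum_concat] at hQ
  rw [RSsum_sub_const, RSsum_sub_const, RSsum_sub_const]
  linear_combination hQ

theorem two_point_dual_identity_general
    (a b t0 x t1 I1 I2 I3 I4 : ℝ) (f u : ℝ → ℝ)
    (ht0 : a ≤ t0) (ht01 : t0 ≤ t1) (ht1 : t1 ≤ b)
    (hI1 : IsRSIntegral (fun s => u s - u a) f a t0 I1)
    (hI2 : IsRSIntegral (fun s => u s - u x) f t0 t1 I2)
    (hI3 : IsRSIntegral (fun s => u s - u b) f t1 b I3)
    (hI4 : IsRSIntegral f u a b I4) :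
    I1 + I2 + I3 = (u x - u a) * f t0 + (u b - u x) * f t1 - I4 := by
  have hP₁ := meshTendstoZero_uniform a t0 ht0
  have hP₂ := meshTendstoZero_uniform t0 t1 ht01
  have hP₃ := meshTendstoZero_uniform t1 b ht1
  have hsum := ((hI1.tendsto hP₁).add (hI2.tendsto hP₂)).add (hI3.tendsto hP₃)
  simp only [RSsum_two_point_dual] at hsum
  exact tendsto_nhds_unique hsum
    (tendsto_const_nhds.sub (hI4.tendsto ((hP₁.concat hP₂).concat hP₃).dual))

theorem two_point_dual_identity
    (a b t0 x t1 I1 I2 I3 I4 : ℝ) (f u : ℝ → ℝ)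
    (hax : a < x) (hxb : x < b) (ht0 : a ≤ t0) (ht01 : t0 ≤ t1) (ht1 : t1 ≤ b)
    (hI1 : IsRSIntegral (fun s => u s - u a) f a t0 I1)
    (hI2 : IsRSIntegral (fun s => u s - u x) f t0 t1 I2)
    (hI3 : IsRSIntegral (fun s => u s - u b) f t1 b I3)
    (hI4 : IsRSIntegral f u a b I4) :
    I1 + I2 + I3 = (u x - u a) * f t0 + (u b - u x) * f t1 - I4 :=
  two_point_dual_identity_general a b t0 x t1 I1 I2 I3 I4 f u ht0 ht01 ht1 hI1 hI2 hI3 hI4
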